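/- Let L be a Lie superalgebra over k, z ∈ Z(L) with |z| = 0, and α ∈ k. Then the map φ(x⊗y) = α[x,y]⊗z + (−1)^{|x||y|} y⊗x (defined on homogeneous elements and extended linearly) satisfies the braid equation. -/

import Mathlib

/-!
Both sides are trilinear, so it suffices to compare them on `x ⊗ y ⊗ w` with `x, y, w`
homogeneous. Because `z` is even and central, `φ` acts as the plain flip on every tensor with a
factor `z`, and expanding both sides term by term gives the same expressions except for the
`α²`-terms, `([[x,y],w] + (-1)^{|x||y|} [y,[x,w]]) ⊗ z ⊗ z` on one side and `[x,[y,w]] ⊗ z ⊗ z`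
on the other. These agree by the super Jacobi identity, read as the statement that `[x, -]` is a
superderivation.
-/

open TensorProduct

noncomputable section

def tw (k V : Type*) [Field k] [AddCommGroup V] [Module k V] :
    V ⊗[k] V →ₗ[k] V ⊗[k] V := (TensorProduct.comm k V V).toLinearMap

def R12 {k V : Type*} [Field k] [AddCommGroup V] [Module k V]
    (R : V ⊗[k] V →ₗ[k] V ⊗[k] V) :
    V ⊗[k] (V ⊗[k] V) →ₗ[k] V ⊗[k] (V ⊗[k] V) :=
  (TensorProduct.assoc k V V V).toLinearMap ∘ₗ TensorProduct.map R LinearMap.id ∘ₗ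
    (TensorProduct.assoc k V V V).symm.toLinearMap

def R23 {k V : Type*} [Field k] [AddCommGroup V] [Module k V]
    (R : V ⊗[k] V →ₗ[k] V ⊗[k] V) :
    V ⊗[k] (V ⊗[k] V) →ₗ[k] V ⊗[k] (V ⊗[k] V) :=
  TensorProduct.map LinearMap.id R

def R13 {k V : Type*} [Field k] [AddCommGroup V] [Module k V]
    (R : V ⊗[k] V →ₗ[k] V ⊗[k] V) :
    V ⊗[k] (V ⊗[k] V) →ₗ[k] V ⊗[k] (V ⊗[k] V) :=
  TensorProduct.map LinearMap.id (tw k V) ∘ₗ R12 R ∘ₗ TensorProduct.map LinearMap.id (tw k V)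

theorem neg_one_pow_val_add_mul {R : Type*} [Ring R] (i j l : ZMod 2) :
    (-1 : R) ^ ((i + j).val * l.val) = (-1) ^ (i.val * l.val) * (-1) ^ (j.val * l.val) := by
  rw [← pow_add, ← add_mul, neg_one_pow_eq_pow_mod_two, ZMod.val_add, Nat.mod_mul_mod,
    ← neg_one_pow_eq_pow_mod_two]

theorem neg_one_pow_val_mul_add {R : Type*} [Ring R] (i j l : ZMod 2) :
    (-1 : R) ^ (i.val * (j + l).val) = (-1) ^ (i.val * j.val) * (-1) ^ (i.val * l.val) := by
  rw [Nat.mul_comm, neg_one_pow_val_add_mul, Nat.mul_comm j.val, Nat.mul_comm l.val]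

section Braiding

variable {k V : Type*} [Field k] [AddCommGroup V] [Module k V]

@[simp]
theorem R12_tmul (R : V ⊗[k] V →ₗ[k] V ⊗[k] V) (u v t : V) :
    R12 R (u ⊗ₜ (v ⊗ₜ t)) = TensorProduct.assoc k V V V (R (u ⊗ₜ v) ⊗ₜ t) := by
  simp [R12]

@[simp]
theorem R23_tmul (R : V ⊗[k] V →ₗ[k] V ⊗[k] V) (u : V) (s : V ⊗[k] V) :
    R23 R (u ⊗ₜ s) = u ⊗ₜ R s := by
  simp [R23]

end Braiding

theorem TensorProduct.ext_threefold_of_iSup_eq_top {R M N ι : Type*} [CommRing R]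
    [AddCommGroup M] [Module R M] [AddCommGroup N] [Module R N] {p : ι → Submodule R M}
    (hp : iSup p = ⊤) {f g : M ⊗[R] (M ⊗[R] M) →ₗ[R] N}
    (h : ∀ i j l, ∀ x ∈ p i, ∀ y ∈ p j, ∀ w ∈ p l,
      f (x ⊗ₜ (y ⊗ₜ w)) = g (x ⊗ₜ (y ⊗ₜ w))) :
    f = g := by
  have induction_on {motive : M → Prop} (v : M) (mem : ∀ i, ∀ x ∈ p i, motive x)
      (zero : motive 0) (add : ∀ x y, motive x → motive y → motive (x + y)) : motive v :=
    Submodule.iSup_induction p (motive := motive) (hp ▸ Submodule.mem_top) mem zero add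
  refine TensorProduct.ext_threefold' fun x y w ↦ ?_
  induction x using induction_on with
  | zero => simp
  | add x x' hx hx' => simp only [add_tmul, map_add, hx, hx']
  | mem i x hx =>
  induction y using induction_on with
  | zero => simp
  | add y y' hy hy' => simp only [add_tmul, tmul_add, map_add, hy, hy']
  | mem j y hy =>
  induction w using induction_on with
  | zero => simp
  | add w w' hw hw' => simp only [tmul_add, map_add, hw, hw']
  | mem l w hw => exact h i j l x hx y hy w hw

section SuperLie

variable {k L : Type*} [CommRing k] [AddCommGroup L] [Module k L]

structure IsLieSuperBracket (G : ZMod 2 → Submodule k L) (b : L →ₗ[k] L →ₗ[k] L) : Prop where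
  mem_add : ∀ i j : ZMod 2, ∀ x ∈ G i, ∀ y ∈ G j, b x y ∈ G (i + j)
  antisymm : ∀ i j : ZMod 2, ∀ x ∈ G i, ∀ y ∈ G j,
    b x y = -(((-1 : k) ^ (i.val * j.val)) • b y x)
  jacobi : ∀ i j l : ZMod 2, ∀ x ∈ G i, ∀ y ∈ G j, ∀ w ∈ G l,
    ((-1 : k) ^ (l.val * i.val)) • b x (b y w) +
      ((-1 : k) ^ (i.val * j.val)) • b y (b w x) +
      ((-1 : k) ^ (j.val * l.val)) • b w (b x y) = 0

namespace IsLieSuperBracket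

variable {G : ZMod 2 → Submodule k L} {b : L →ₗ[k] L →ₗ[k] L}

theorem apply_central_eq_zero (hb : IsLieSuperBracket G b) {z : L} (hz0 : z ∈ G 0)
    (hz : ∀ x : L, b z x = 0) {i : ZMod 2} {x : L} (hx : x ∈ G i) : b x z = 0 := by
  rw [hb.antisymm i 0 x hx z hz0, hz, smul_zero, neg_zero]

theorem leibniz (hb : IsLieSuperBracket G b) {i j l : ZMod 2} {x y w : L}
    (hx : x ∈ G i) (hy : y ∈ G j) (hw : w ∈ G l) :
    b x (b y w) = ((-1 : k) ^ (i.val * j.val)) • b y (b x w) + b (b x y) w := by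
  have J := hb.jacobi i j l x hx y hy w hw
  rw [hb.antisymm l i w hw x hx, hb.antisymm l (i + j) w hw _ (hb.mem_add i j x hx y hy),
    neg_one_pow_val_mul_add, Nat.mul_comm l.val j.val] at J
  simp only [map_neg, map_smul, smul_neg, smul_smul] at J
  -- once the two remaining signs are evaluated to `±1`, `J` is `±` the goal
  rcases neg_one_pow_eq_or k (l.val * i.val) with h₁ | h₁ <;>
    rcases neg_one_pow_eq_or k (j.val * l.val) with h₂ | h₂ <;>
    rw [h₁, h₂] at J <;>
    first
    | linear_combination (norm := module) J
    | linear_combination (norm := module) -J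

end IsLieSuperBracket

end SuperLie

section Braid

variable {k L : Type*} [Field k] [AddCommGroup L] [Module k L]
  {G : ZMod 2 → Submodule k L} {b : L →ₗ[k] L →ₗ[k] L}

theorem braid_tmul_of_mem (hb : IsLieSuperBracket G b) {z : L} (hz0 : z ∈ G 0)
    (hz : ∀ x : L, b z x = 0) {α : k} {φ : L ⊗[k] L →ₗ[k] L ⊗[k] L}
    (hφ : ∀ i j : ZMod 2, ∀ x ∈ G i, ∀ y ∈ G j,
      φ (x ⊗ₜ y) = α • (b x y) ⊗ₜ z + ((-1 : k) ^ (i.val * j.val)) • y ⊗ₜ x)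
    {i j l : ZMod 2} {x y w : L} (hx : x ∈ G i) (hy : y ∈ G j) (hw : w ∈ G l) :
    R12 φ (R23 φ (R12 φ (x ⊗ₜ (y ⊗ₜ w)))) = R23 φ (R12 φ (R23 φ (x ⊗ₜ (y ⊗ₜ w)))) := by
  have central_tmul {m : ZMod 2} {v : L} (hv : v ∈ G m) : φ (z ⊗ₜ v) = v ⊗ₜ z := by
    simp [hφ 0 m z hz0 v hv, hz]
  have tmul_central {m : ZMod 2} {v : L} (hv : v ∈ G m) : φ (v ⊗ₜ z) = z ⊗ₜ v := by
    simp [hφ m 0 v hv z hz0, hb.apply_central_eq_zero hz0 hz hv]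
  have bracket_tmul : φ (b x y ⊗ₜ w) = α • b (b x y) w ⊗ₜ z +
      ((-1 : k) ^ (i.val * l.val) * (-1) ^ (j.val * l.val)) • w ⊗ₜ b x y := by
    rw [hφ _ l _ (hb.mem_add i j x hx y hy) w hw, neg_one_pow_val_add_mul]
  have tmul_bracket_left : φ (y ⊗ₜ b x w) = α • b y (b x w) ⊗ₜ z +
      ((-1 : k) ^ (i.val * j.val) * (-1) ^ (j.val * l.val)) • b x w ⊗ₜ y := by
    rw [hφ j _ y hy _ (hb.mem_add i l x hx w hw), neg_one_pow_val_mul_add,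
      Nat.mul_comm j.val i.val]
  have tmul_bracket_right : φ (x ⊗ₜ b y w) = α • b x (b y w) ⊗ₜ z +
      ((-1 : k) ^ (i.val * j.val) * (-1) ^ (i.val * l.val)) • b y w ⊗ₜ x := by
    rw [hφ i _ x hx _ (hb.mem_add j l y hy w hw), neg_one_pow_val_mul_add]
  simp only [R12_tmul, R23_tmul, hφ i j x hx y hy, hφ j l y hy w hw, hφ i l x hx w hw,
    bracket_tmul, tmul_bracket_left, tmul_bracket_right, central_tmul hz0, central_tmul hy,
    central_tmul hw, tmul_central hx, hb.leibniz hx hy hw, map_add, map_smul, add_tmul,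
    tmul_add, ← smul_tmul', tmul_smul, assoc_tmul, smul_add, smul_smul]
  -- the sign `(-1)^{|x||y|}` enters squared
  rcases neg_one_pow_eq_or k (i.val * j.val) with h | h <;> rw [h] <;> module

end Braid

theorem lie_superalgebra_braid {k L : Type*} [Field k] [AddCommGroup L] [Module k L]
    (G : ZMod 2 → Submodule k L) (hG : DirectSum.IsInternal G)
    (b : L →ₗ[k] L →ₗ[k] L)
    (hgrade : ∀ i j : ZMod 2, ∀ x ∈ G i, ∀ y ∈ G j, b x y ∈ G (i + j))
    (hanti : ∀ i j : ZMod 2, ∀ x ∈ G i, ∀ y ∈ G j,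
      b x y = -(((-1 : k) ^ (i.val * j.val)) • b y x))
    (hjacobi : ∀ i j l : ZMod 2, ∀ x ∈ G i, ∀ y ∈ G j, ∀ w ∈ G l,
      ((-1 : k) ^ (l.val * i.val)) • b x (b y w) +
        ((-1 : k) ^ (i.val * j.val)) • b y (b w x) +
        ((-1 : k) ^ (j.val * l.val)) • b w (b x y) = 0)
    (z : L) (hz0 : z ∈ G 0) (hz : ∀ x : L, b z x = 0)
    (α : k)
    (φ : L ⊗[k] L →ₗ[k] L ⊗[k] L)
    (hφ : ∀ i j : ZMod 2, ∀ x ∈ G i, ∀ y ∈ G j,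
      φ (x ⊗ₜ y) = α • (b x y) ⊗ₜ z + ((-1 : k) ^ (i.val * j.val)) • y ⊗ₜ x) :
    R12 φ ∘ₗ R23 φ ∘ₗ R12 φ = R23 φ ∘ₗ R12 φ ∘ₗ R23 φ := by
  have hb : IsLieSuperBracket G b := ⟨hgrade, hanti, hjacobi⟩
  refine TensorProduct.ext_threefold_of_iSup_eq_top hG.submodule_iSup_eq_top
    fun i j l x hx y hy w hw ↦ ?_
  exact braid_tmul_of_mem hb hz0 hz hφ hx hy hw
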